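/- arXiv:1502.01461 — 4 statements merged into one kernel-verified Lean document; each statement's English description precedes it below -/
import Mathlib

section
/- Let G be a directed graph on n vertices. Construct G' with vertices {v⁻, v⁺ : v ∈ V(G)} ∪ {s, t}, and arcs: (v⁻, v⁺) for each v ∈ V(G); (u⁺, v⁻) for each arc (u,v) ∈ E(G); (s, v⁻) and (v⁺, t) for each v ∈ V(G). Then G' has a trail of length at least 2n + 1 if and only if G has a Hamiltonian path. -/
/-- A trail of length `k` in the digraph with arc relation `A`: a walk along `k` arcs
with pairwise distinct arcs (vertices may repeat). -/
def TrailOn {W : Type*} (A : W → W → Prop) (k : ℕ) (v : ℕ → W) : Prop :=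
  (∀ i < k, A (v i) (v (i + 1))) ∧
    ∀ i < k, ∀ j < k, (v i, v (i + 1)) = (v j, v (j + 1)) → i = j

/-- Vertices of the auxiliary graph G': `Sum.inl (v, false)` is v⁻, `Sum.inl (v, true)`
is v⁺, `Sum.inr false` is s and `Sum.inr true` is t. -/
abbrev AuxV (V : Type*) := (V × Bool) ⊕ Bool

/-- Arcs of the auxiliary graph G': (v⁻,v⁺) for each vertex v, (u⁺,v⁻) for each arc
(u,v) of G, and (s,v⁻), (v⁺,t) for each vertex v. -/
def AuxA {V : Type*} (A : V → V → Prop) : AuxV V → AuxV V → Prop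
  | Sum.inl (v, false), Sum.inl (w, true) => v = w
  | Sum.inl (u, true), Sum.inl (w, false) => A u w
  | Sum.inr false, Sum.inl (_, false) => True
  | Sum.inl (_, true), Sum.inr true => True
  | _, _ => False

section AuxLemmas

variable {V : Type*} {A : V → V → Prop}

lemma AuxA.minus_step {a : V} {x} (h : AuxA A (Sum.inl (a, false)) x) :
    x = Sum.inl (a, true) := by
  rcases x with ⟨b, (_ | _)⟩ | (_ | _) <;> simp_all [AuxA]

lemma AuxA.plus_step {a : V} {x} (h : AuxA A (Sum.inl (a, true)) x) :
    (∃ b, x = Sum.inl (b, false) ∧ A a b) ∨ x = Sum.inr true := by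
  rcases x with ⟨b, (_ | _)⟩ | (_ | _) <;> simp_all [AuxA]

lemma AuxA.s_step {x} (h : AuxA A (Sum.inr false) x) : ∃ b : V, x = Sum.inl (b, false) := by
  rcases x with ⟨b, (_ | _)⟩ | (_ | _) <;> simp_all [AuxA]

lemma AuxA.not_t_step {x : AuxV V} : ¬ AuxA A (Sum.inr true) x := by
  rcases x with ⟨b, (_ | _)⟩ | (_ | _) <;> simp_all [AuxA]

lemma AuxA.nonempty {x y} (h : AuxA A x y) : Nonempty V := by
  rcases x with ⟨a, (_ | _)⟩ | (_ | _) <;> rcases y with ⟨b, (_ | _)⟩ | (_ | _) <;>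
    first | exact ⟨a⟩ | exact ⟨b⟩ | simp_all [AuxA]

end AuxLemmas

/-- The canonical walk s, v₀⁻, v₀⁺, v₁⁻, v₁⁺, …, v_{n-1}⁻, v_{n-1}⁺, t. -/
def hamWalk {V : Type*} (v : ℕ → V) (n : ℕ) : ℕ → AuxV V := fun j =>
  if j = 0 then Sum.inr false
  else if 2 * n + 1 ≤ j then Sum.inr true
  else Sum.inl (v ((j - 1) / 2), decide (j % 2 = 0))

lemma hamWalk_zero {V : Type*} (v : ℕ → V) (n : ℕ) : hamWalk v n 0 = Sum.inr false := rfl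

lemma hamWalk_top {V : Type*} (v : ℕ → V) (n : ℕ) :
    hamWalk v n (2 * n + 1) = Sum.inr true := by
  unfold hamWalk
  rw [if_neg (by omega), if_pos (le_refl _)]

lemma hamWalk_minus {V : Type*} (v : ℕ → V) {n i : ℕ} (hi : i < n) :
    hamWalk v n (2 * i + 1) = Sum.inl (v i, false) := by
  unfold hamWalk
  rw [if_neg (by omega), if_neg (by omega)]
  have h1 : (2 * i + 1 - 1) / 2 = i := by omega
  have h2 : (2 * i + 1) % 2 = 1 := by omega
  rw [h1, h2]
  simp

lemma hamWalk_plus {V : Type*} (v : ℕ → V) {n i : ℕ} (hi : i < n) :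
    hamWalk v n (2 * i + 2) = Sum.inl (v i, true) := by
  unfold hamWalk
  rw [if_neg (by omega), if_neg (by omega)]
  have h1 : (2 * i + 2 - 1) / 2 = i := by omega
  have h2 : (2 * i + 2) % 2 = 0 := by omega
  rw [h1, h2]
  simp

/-- G' has a trail of length at least 2n+1 iff G has a Hamiltonian path. -/
theorem aux_trail_iff_hamPath {V : Type*} [Fintype V] (A : V → V → Prop)
    (hloop : Irreflexive A) :
    (∃ k, 2 * Fintype.card V + 1 ≤ k ∧ ∃ v : ℕ → AuxV V, TrailOn (AuxA A) k v) ↔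
    (∃ v : ℕ → V,
      (∀ i, i + 1 < Fintype.card V → A (v i) (v (i + 1))) ∧
      (∀ i < Fintype.card V, ∀ j < Fintype.card V, v i = v j → i = j)) := by
  set n := Fintype.card V with hn
  constructor
  · rintro ⟨k, hk, w, harc, hinj⟩
    by_cases hVne : Nonempty V
    swap
    · exact absurd (AuxA.nonempty (harc 0 (by omega))) hVne
    haveI := hVne
    have hn1 : 1 ≤ n := hn ▸ Fintype.card_pos
    -- minus positions have pairwise distinct vertices
    have minj : ∀ i, i < k → ∀ j, j < k → ∀ a : V, w i = Sum.inl (a, false) →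
        w j = Sum.inl (a, false) → i = j := by
      intro i hi j hj a ha hb
      have h1 := harc i hi; rw [ha] at h1
      have h2 := harc j hj; rw [hb] at h2
      exact hinj i hi j hj (by rw [ha, hb, AuxA.minus_step h1, AuxA.minus_step h2])
    -- from a minus position p with p+2 < k, the position p+2 is again a minus position
    have step2 : ∀ p a, p + 2 < k → w p = Sum.inl (a, false) →
        ∃ b, w (p + 2) = Sum.inl (b, false) ∧ w (p + 1) = Sum.inl (a, true) := by
      intro p a hp hpa
      have h1 := harc p (by omega); rw [hpa] at h1
      have hp1 := AuxA.minus_step h1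
      have h2 := harc (p + 1) (by omega); rw [hp1] at h2
      rcases AuxA.plus_step h2 with ⟨b, hb, _⟩ | ht
      · exact ⟨b, hb, hp1⟩
      · have h3 := harc (p + 2) hp; rw [ht] at h3
        exact absurd h3 AuxA.not_t_step
    -- position 1 is a minus position
    have h1ex : ∃ b : V, w 1 = Sum.inl (b, false) := by
      rcases hw0 : w 0 with ⟨a, (_ | _)⟩ | (_ | _)
      · -- w 0 = a⁻ : impossible, would give n+1 distinct vertices
        exfalso
        have hm : ∀ i, i ≤ n → ∃ b, w (2 * i) = Sum.inl (b, false) := by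
          intro i
          induction i with
          | zero => exact fun _ => ⟨a, hw0⟩
          | succ i ih =>
            intro hi
            obtain ⟨b, hb⟩ := ih (by omega)
            obtain ⟨c, hc, -⟩ := step2 (2 * i) b (by omega) hb
            refine ⟨c, ?_⟩
            have he : 2 * (i + 1) = 2 * i + 2 := by omega
            rw [he]; exact hc
        have hchoice := fun i : Fin (n + 1) => hm i (by omega)
        choose f hf using hchoice
        have hfinj : Function.Injective f := by
          intro i j hij
          have hi := i.isLt
          have hj := j.isLt
          have := minj (2 * (i : ℕ)) (by omega) (2 * (j : ℕ)) (by omega) (f i) (hf i)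
            (by rw [hij]; exact hf j)
          exact Fin.ext (by omega)
        have hcard := Fintype.card_le_of_injective f hfinj
        rw [Fintype.card_fin] at hcard
        omega
      · -- w 0 = a⁺
        have h := harc 0 (by omega); rw [hw0] at h
        rcases AuxA.plus_step h with ⟨b, hb, -⟩ | ht
        · exact ⟨b, hb⟩
        · have h2 := harc 1 (by omega); rw [ht] at h2
          exact absurd h2 AuxA.not_t_step
      · -- w 0 = s
        have h := harc 0 (by omega); rw [hw0] at h
        exact AuxA.s_step h
      · -- w 0 = t
        have h := harc 0 (by omega); rw [hw0] at h
        exact absurd h AuxA.not_t_step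
    obtain ⟨b0, hb0⟩ := h1ex
    -- odd positions 2i+1, i < n, are minus positions
    have hm : ∀ i, i < n → ∃ b, w (2 * i + 1) = Sum.inl (b, false) := by
      intro i
      induction i with
      | zero => exact fun _ => ⟨b0, hb0⟩
      | succ i ih =>
        intro hi
        obtain ⟨b, hb⟩ := ih (by omega)
        obtain ⟨c, hc, -⟩ := step2 (2 * i + 1) b (by omega) hb
        refine ⟨c, ?_⟩
        have he : 2 * (i + 1) + 1 = 2 * i + 1 + 2 := by omega
        rw [he]; exact hc
    choose f hf using hm
    refine ⟨fun i => if h : i < n then f i h else Classical.arbitrary V, ?_, ?_⟩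
    · intro i hi
      have hvi : w (2 * i + 1) = Sum.inl (f i (by omega), false) := hf i (by omega)
      have hvj : w (2 * (i + 1) + 1) = Sum.inl (f (i + 1) hi, false) := hf (i + 1) hi
      have h1 := harc (2 * i + 1) (by omega); rw [hvi] at h1
      have h2 := AuxA.minus_step h1
      have h3 := harc (2 * i + 1 + 1) (by omega); rw [h2] at h3
      simp only [dif_pos (show i < n by omega), dif_pos hi]
      rcases AuxA.plus_step h3 with ⟨c, hc, hAc⟩ | ht
      · have he : 2 * i + 1 + 1 + 1 = 2 * (i + 1) + 1 := by omega
        rw [he, hvj] at hc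
        have : c = f (i + 1) hi := by
          have := Sum.inl.inj hc
          exact ((Prod.mk.injEq _ _ _ _ ▸ this).1).symm
        rwa [this] at hAc
      · have he : 2 * i + 1 + 1 + 1 = 2 * (i + 1) + 1 := by omega
        rw [he, hvj] at ht
        exact absurd ht (by simp)
    · intro i hi j hj hij
      simp only [dif_pos hi, dif_pos hj] at hij
      have h1 : w (2 * i + 1) = Sum.inl (f i hi, false) := hf i hi
      have h2 : w (2 * j + 1) = Sum.inl (f i hi, false) := by rw [hij] at h1 ⊢ <;> exact hf j hj
      have := minj (2 * i + 1) (by omega) (2 * j + 1) (by omega) (f i hi) h1 h2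
      omega
  · rintro ⟨v, hadj, hvinj⟩
    haveI : Nonempty V := ⟨v 0⟩
    have hn1 : 1 ≤ n := hn ▸ Fintype.card_pos
    refine ⟨2 * n + 1, le_refl _, hamWalk v n, ?_, ?_⟩
    · intro i hi
      rcases Nat.even_or_odd i with ⟨j, hj⟩ | ⟨j, hj⟩
      · -- i even
        rcases Nat.eq_zero_or_pos j with rfl | hjpos
        · have h0 : i = 0 := by omega
          rw [h0, hamWalk_zero, show (0 : ℕ) + 1 = 2 * 0 + 1 from rfl,
            hamWalk_minus v (show 0 < n by omega)]
          simp [AuxA]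
        · -- i = 2j, 1 ≤ j ≤ n : plus vertex v (j-1)
          have h1 : i = 2 * (j - 1) + 2 := by omega
          rw [h1, hamWalk_plus v (show j - 1 < n by omega)]
          rcases eq_or_lt_of_le (show i + 1 ≤ 2 * n + 1 by omega) with he | hlt
          · rw [show 2 * (j - 1) + 2 + 1 = 2 * n + 1 by omega, hamWalk_top]
            simp [AuxA]
          · have hjn : j < n := by omega
            rw [show 2 * (j - 1) + 2 + 1 = 2 * j + 1 by omega, hamWalk_minus v hjn]
            show A (v (j - 1)) (v j)
            have h := hadj (j - 1) (by omega)
            rwa [show j - 1 + 1 = j by omega] at h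
      · -- i odd : i = 2j+1, j < n : minus vertex
        have hjn : j < n := by omega
        rw [hj, hamWalk_minus v hjn, show 2 * j + 1 + 1 = 2 * j + 2 by omega,
          hamWalk_plus v hjn]
        simp [AuxA]
    · -- trail condition: in fact the walk is injective on [0, 2n]
      have winj : ∀ i < 2 * n + 1, ∀ j < 2 * n + 1, hamWalk v n i = hamWalk v n j → i = j := by
        intro i hi j hj h
        unfold hamWalk at h
        by_cases h0i : i = 0 <;> by_cases h0j : j = 0
        · omega
        · rw [if_pos h0i, if_neg h0j, if_neg (by omega)] at h
          exact absurd h (by simp)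
        · rw [if_neg h0i, if_neg (by omega), if_pos h0j] at h
          exact absurd h (by simp)
        · rw [if_neg h0i, if_neg (by omega), if_neg h0j, if_neg (by omega)] at h
          rw [Sum.inl.injEq, Prod.mk.injEq] at h
          obtain ⟨h1, h2⟩ := h
          have hvv := hvinj _ (show (i - 1) / 2 < n by omega) _ (show (j - 1) / 2 < n by omega) h1
          rw [decide_eq_decide] at h2
          omega
      intro i hi j hj heq
      exact winj i hi j hj (congrArg Prod.fst heq)
end

section
/- In the graph G' constructed from a directed graph G (as in the Hamiltonian-path-to-trail reduction), any trail of length at least 2n+1 can be modified, without decreasing its length, into a trail that starts at s and ends at t. -/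
/-! A trail can always be extended or rerouted through a source at its start and a sink at its
end, since such a vertex cannot occur anywhere else on the trail. In G' the rerouting costs no
length: a trail starting at x⁺ continues to some w⁻ (not to t, as t ends every trail), and
s → w⁻; dually, a trail ending at y⁻ arrives from some u⁺, and u⁺ → t. -/

namespace TrailOn

variable {W : Type*} {A : W → W → Prop} {k : ℕ} {v : ℕ → W}

theorem mono (ht : TrailOn A k v) {m : ℕ} (hm : m ≤ k) : TrailOn A m v :=
  ⟨fun i hi => ht.1 i (by omega), fun i hi j hj h => ht.2 i (by omega) j (by omega) h⟩

theorem tail (ht : TrailOn A (k + 1) v) : TrailOn A k (Stream'.tail v) :=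
  ⟨fun i hi => ht.1 (i + 1) (by omega), fun i hi j hj h => by
    simpa using ht.2 (i + 1) (by omega) (j + 1) (by omega) h⟩

theorem ne_of_isSource {a : W} (ha : ∀ x, ¬A x a) (ht : TrailOn A k v) {i : ℕ}
    (hi : 0 < i) (hik : i ≤ k) : v i ≠ a := by
  obtain ⟨j, rfl⟩ : ∃ j, i = j + 1 := ⟨i - 1, by omega⟩
  exact fun h => ha _ (h ▸ ht.1 j (by omega))

theorem ne_of_isSink {b : W} (hb : ∀ x, ¬A b x) (ht : TrailOn A k v) {i : ℕ} (hi : i < k) :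
    v i ≠ b :=
  fun h => hb _ (h ▸ ht.1 i hi)

theorem cons_of_isSource {a : W} (ha : ∀ x, ¬A x a) (hav : A a (v 0)) (ht : TrailOn A k v) :
    TrailOn A (k + 1) (Stream'.cons a v) := by
  have hva : ∀ i ≤ k, v i ≠ a := by
    rintro (_ | i) hi
    · exact fun h => ha _ (h ▸ hav)
    · exact ht.ne_of_isSource ha (by omega) hi
  refine ⟨?_, ?_⟩
  · rintro (_ | i) hi
    · exact hav
    · exact ht.1 i (by omega)
  · rintro (_ | i) hi (_ | j) hj h
    · rfl
    · exact absurd (congrArg Prod.fst h).symm (hva j (by omega))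
    · exact absurd (congrArg Prod.fst h) (hva i (by omega))
    · exact congrArg (· + 1) (ht.2 i (by omega) j (by omega) h)

theorem update_succ_of_isSink {b : W} (hb : ∀ x, ¬A b x) (hvb : A (v k) b)
    (ht : TrailOn A k v) : TrailOn A (k + 1) (Function.update v (k + 1) b) := by
  have hvb' : ∀ i ≤ k, v i ≠ b := fun i hi => by
    rcases hi.lt_or_eq with hi | rfl
    · exact ht.ne_of_isSink hb hi
    · exact fun h => hb _ (h ▸ hvb)
  have hu : ∀ i ≤ k, Function.update v (k + 1) b i = v i :=
    fun i hi => Function.update_of_ne (by omega) _ _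
  refine ⟨fun i hi => ?_, fun i hi j hj h => ?_⟩
  · rcases (Nat.lt_succ_iff.mp hi).lt_or_eq with hi | rfl
    · rw [hu i hi.le, hu (i + 1) hi]
      exact ht.1 i hi
    · rw [hu i le_rfl, Function.update_self]
      exact hvb
  · have h2 := congrArg Prod.snd h
    rcases (Nat.lt_succ_iff.mp hi).lt_or_eq with hi | rfl <;>
      rcases (Nat.lt_succ_iff.mp hj).lt_or_eq with hj | rfl
    · rw [hu i hi.le, hu (i + 1) hi, hu j hj.le, hu (j + 1) hj] at h
      exact ht.2 i hi j hj h
    · rw [hu (i + 1) hi, Function.update_self] at h2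
      exact absurd h2 (hvb' _ hi)
    · rw [hu (j + 1) hj, Function.update_self] at h2
      exact absurd h2.symm (hvb' _ hj)
    · rfl

end TrailOn

section AuxGraph

variable {V : Type*} {A : V → V → Prop}

theorem not_auxA_to_s (a : AuxV V) : ¬AuxA A a (Sum.inr false) := by
  rcases a with ⟨x, _ | _⟩ | _ | _ <;> exact id

theorem not_auxA_from_t (b : AuxV V) : ¬AuxA A (Sum.inr true) b := by
  rcases b with ⟨x, _ | _⟩ | _ | _ <;> exact id

theorem auxA_s_of_auxA_plus {x : V} {b : AuxV V} (h : AuxA A (Sum.inl (x, true)) b)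
    (hb : b ≠ Sum.inr true) : AuxA A (Sum.inr false) b := by
  rcases b with ⟨w, _ | _⟩ | _ | _ <;> trivial

theorem auxA_t_of_auxA_minus {y : V} {a : AuxV V} (h : AuxA A a (Sum.inl (y, false)))
    (ha : a ≠ Sum.inr false) : AuxA A a (Sum.inr true) := by
  rcases a with ⟨u, _ | _⟩ | _ | _ <;> trivial

theorem exists_trail_from_s {k : ℕ} {v : ℕ → AuxV V} (hk : 2 ≤ k)
    (ht : TrailOn (AuxA A) k v) :
    ∃ (k' : ℕ) (v' : ℕ → AuxV V), k ≤ k' ∧ TrailOn (AuxA A) k' v' ∧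
      v' 0 = Sum.inr false ∧ v' k' = v k := by
  rcases h0 : v 0 with ⟨x, _ | _⟩ | _ | _
  · exact ⟨k + 1, Stream'.cons (Sum.inr false) v, by omega,
      ht.cons_of_isSource not_auxA_to_s (by rw [h0]; trivial), rfl, rfl⟩
  · obtain ⟨k, rfl⟩ : ∃ k₀, k = k₀ + 1 := ⟨k - 1, by omega⟩
    have hs : AuxA A (Sum.inr false) (v 1) :=
      auxA_s_of_auxA_plus (h0 ▸ ht.1 0 (by omega)) (ht.ne_of_isSink not_auxA_from_t (by omega))
    exact ⟨k + 1, Stream'.cons (Sum.inr false) (Stream'.tail v), le_rfl,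
      ht.tail.cons_of_isSource not_auxA_to_s hs, rfl, rfl⟩
  · exact ⟨k, v, le_rfl, ht, h0, rfl⟩
  · exact absurd h0 (ht.ne_of_isSink not_auxA_from_t (by omega))

theorem exists_trail_to_t {k : ℕ} {v : ℕ → AuxV V} (hk : 2 ≤ k)
    (ht : TrailOn (AuxA A) k v) :
    ∃ (k' : ℕ) (v' : ℕ → AuxV V), k ≤ k' ∧ TrailOn (AuxA A) k' v' ∧
      v' 0 = v 0 ∧ v' k' = Sum.inr true := by
  rcases hk' : v k with ⟨y, _ | _⟩ | _ | _
  · obtain ⟨k, rfl⟩ : ∃ k₀, k = k₀ + 1 := ⟨k - 1, by omega⟩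
    have ht' : AuxA A (v k) (Sum.inr true) :=
      auxA_t_of_auxA_minus (hk' ▸ ht.1 k (by omega))
        (ht.ne_of_isSource not_auxA_to_s (by omega) (by omega))
    exact ⟨k + 1, Function.update v (k + 1) (Sum.inr true), le_rfl,
      (ht.mono k.le_succ).update_succ_of_isSink not_auxA_from_t ht', by simp, by simp⟩
  · exact ⟨k + 1, Function.update v (k + 1) (Sum.inr true), by omega,
      ht.update_succ_of_isSink not_auxA_from_t (by rw [hk']; trivial), by simp, by simp⟩
  · exact absurd hk' (ht.ne_of_isSource not_auxA_to_s (by omega) le_rfl)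
  · exact ⟨k, v, le_rfl, ht, rfl, hk'⟩

theorem nonempty_of_auxA {a b : AuxV V} (h : AuxA A a b) : Nonempty V := by
  rcases a with ⟨x, _⟩ | _ | _
  · exact ⟨x⟩
  · rcases b with ⟨y, _⟩ | _
    · exact ⟨y⟩
    · exact h.elim
  · exact absurd h (not_auxA_from_t _)

end AuxGraph

theorem aux_trail_to_st_general {V : Type*} [Fintype V] (A : V → V → Prop)
    (k : ℕ) (v : ℕ → AuxV V)
    (hk : 2 * Fintype.card V + 1 ≤ k) (ht : TrailOn (AuxA A) k v) :
    ∃ (k' : ℕ) (v' : ℕ → AuxV V), k ≤ k' ∧ TrailOn (AuxA A) k' v' ∧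
      v' 0 = Sum.inr false ∧ v' k' = Sum.inr true := by
  have : Nonempty V := nonempty_of_auxA (ht.1 0 (by omega))
  have hk2 : 2 ≤ k := by have := Fintype.card_pos (α := V); omega
  obtain ⟨k₁, v₁, hk₁, ht₁, hs₁, -⟩ := exists_trail_from_s hk2 ht
  obtain ⟨k₂, v₂, hk₂, ht₂, h₀, hT⟩ := exists_trail_to_t (by omega) ht₁
  exact ⟨k₂, v₂, by omega, ht₂, h₀.trans hs₁, hT⟩

/-- any trail of length at least 2n+1 in G' can be modified, without
decreasing its length, into a trail that starts at s and ends at t. -/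
theorem aux_trail_to_st {V : Type*} [Fintype V] (A : V → V → Prop)
    (hloop : Irreflexive A) (k : ℕ) (v : ℕ → AuxV V)
    (hk : 2 * Fintype.card V + 1 ≤ k) (ht : TrailOn (AuxA A) k v) :
    ∃ (k' : ℕ) (v' : ℕ → AuxV V), k ≤ k' ∧ TrailOn (AuxA A) k' v' ∧
      v' 0 = Sum.inr false ∧ v' k' = Sum.inr true :=
  aux_trail_to_st_general A k v hk ht
end

section
/- In the graph G' constructed from a directed graph G on n vertices (as in the Hamiltonian-path-to-trail reduction), every trail has length at most 2n + 1. -/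
/-!
Every arc of G' out of a vertex v⁻ is the single arc (v⁻, v⁺), so a trail leaves each v⁻
at most once, i.e. at most `n` of its first `k` positions are minus vertices. On the other
hand no arc joins two vertices outside {v⁻}, except (v⁺, t), after which the trail must
stop; so among any two consecutive positions below `k` one is a minus vertex, which forces
at least `k / 2` of them.
-/

open Finset

theorem div_two_le_card_of_mem_or_succ_mem {S : Finset ℕ} {k : ℕ}
    (hS : ∀ i, i + 1 < k → i ∈ S ∨ i + 1 ∈ S) : k / 2 ≤ #S := by
  classical
  let pick : ℕ → ℕ := fun j => if 2 * j ∈ S then 2 * j else 2 * j + 1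
  calc k / 2 = #(range (k / 2)) := (card_range _).symm
    _ ≤ #S := by
      refine card_le_card_of_injOn pick (fun j hj => ?_) (fun j _ j' _ hjj' => ?_)
      · have hj : 2 * j + 1 < k := by simp only [coe_range, Set.mem_Iio] at hj; omega
        by_cases h : 2 * j ∈ S
        · simp [pick, h]
        · simpa [pick, h] using (hS (2 * j) hj).resolve_left h
      · simp only [pick] at hjj'
        split_ifs at hjj' <;> omega

theorem TrailOn.injOn {W : Type*} {A : W → W → Prop} {k : ℕ} {v : ℕ → W}
    (ht : TrailOn A k v) {P : W → Prop}
    (hP : ∀ w, P w → ∀ u u', A w u → A w u' → u = u') :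
    Set.InjOn v {i | i < k ∧ P (v i)} := by
  rintro i ⟨hi, hPi⟩ j ⟨hj, -⟩ hij
  refine ht.2 i hi j hj (Prod.ext hij ?_)
  exact hP _ hPi _ _ (ht.1 i hi) (hij ▸ ht.1 j hj)

namespace AuxA

variable {V : Type*} {A : V → V → Prop}

def minus (V : Type*) : V ↪ AuxV V :=
  (Function.Embedding.sectL V false).trans Function.Embedding.inl

theorem eq_of_minus {x : V} {u u' : AuxV V} (hu : AuxA A (minus V x) u)
    (hu' : AuxA A (minus V x) u') : u = u' := by
  rcases u with ⟨y, _ | _⟩ | _ | _ <;> rcases u' with ⟨z, _ | _⟩ | _ | _ <;>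
    simp_all [AuxA, minus]

theorem mem_range_minus_or_mem_range_minus {a b c : AuxV V} (hab : AuxA A a b) (hbc : AuxA A b c) :
    a ∈ Set.range (minus V) ∨ b ∈ Set.range (minus V) := by
  rcases a with ⟨x, _ | _⟩ | _ | _ <;> rcases b with ⟨y, _ | _⟩ | _ | _ <;>
    rcases c with ⟨z, _ | _⟩ | _ | _ <;> simp_all [AuxA, minus]

end AuxA

theorem aux_trail_length_le_general {V : Type*} [Fintype V] (A : V → V → Prop)
    (k : ℕ) (v : ℕ → AuxV V)
    (ht : TrailOn (AuxA A) k v) :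
    k ≤ 2 * Fintype.card V + 1 := by
  classical
  let S := (range k).filter (fun i => v i ∈ Set.range (AuxA.minus V))
  have hcover : ∀ i, i + 1 < k → i ∈ S ∨ i + 1 ∈ S := fun i hi => by
    simpa [S, hi, Nat.lt_of_succ_lt hi] using
      AuxA.mem_range_minus_or_mem_range_minus (ht.1 i (by omega)) (ht.1 (i + 1) hi)
  have hmaps : Set.MapsTo v S (univ.map (AuxA.minus V)) := fun i hi => by
    simpa [S] using (mem_filter.1 hi).2
  have hinj : Set.InjOn v S :=
    (ht.injOn (P := (· ∈ Set.range (AuxA.minus V)))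
      fun _ ⟨_, hx⟩ _ _ => hx ▸ AuxA.eq_of_minus).mono fun i hi => by simpa [S] using hi
  have hcard : #S ≤ Fintype.card V := by
    simpa using card_le_card_of_injOn v hmaps hinj
  have := div_two_le_card_of_mem_or_succ_mem hcover
  omega

/-- every trail in G' has length at most 2n+1. -/
theorem aux_trail_length_le {V : Type*} [Fintype V] (A : V → V → Prop)
    (hloop : Irreflexive A) (k : ℕ) (v : ℕ → AuxV V)
    (ht : TrailOn (AuxA A) k v) :
    k ≤ 2 * Fintype.card V + 1 :=
  aux_trail_length_le_general A k v ht
end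

section
/- Let i, j be positive integers with i, j ≤ 2^{r−1} − 1 and let x_i, x_j denote their binary encodings as strings of length r (so the first symbol of each is '0' when i, j are small enough), and let x* be the all-ones string of length r. For arcs e = (v_p, v_q) and e' = (v_{q'}, v_z) in graphs G_i, G_{i'}, define s_e = x_i x* x_i x_p x_i x* x_i x_q x_i x* x_i. Then |overlap(s_e, s_{e'})| ≤ 7r, with equality if and only if i = i' and q = q'. -/
/-!
Both strings are concatenations of eleven blocks of length `r`: copies of `x*` in blocks 1, 5
and 9, and binary encodings starting with `0` everywhere else. A suffix of `s_e` of length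
`k ∈ (7r, 11r)` matching a prefix of `s_e'` shifts one string against the other by
`0 < 11r - k < 4r`, which always puts an `x*` block of one string against the leading `0` of a
block of the other (and `k = 11r` would make the strings equal). An overlap of length exactly
`7r` compares the last seven blocks `x_i x* x_i x_q x_i x* x_i` of `s_e` with the first seven
blocks `x_i' x* x_i' x_q' x_i' x* x_i'` of `s_e'`, so it exists iff `i = i'` and `q = q'`.
-/

open List

variable {α : Type*} [DecidableEq α]

/-- The length of the longest suffix of `s` that is also a prefix of `t`. -/
def ovLen (s t : List α) : ℕ :=
  Nat.findGreatest (fun i => s.drop (s.length - i) = t.take i) (min s.length t.length)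

/-- The binary encoding of `i` as a string of length `r` (big-endian, with leading
zeros); `false` represents '0' and `true` represents '1'. -/
def binEnc (r i : ℕ) : List Bool := (List.range r).map fun k => Nat.testBit i (r - 1 - k)

/-- The string `s_e = x_i x* x_i x_p x_i x* x_i x_q x_i x* x_i` constructed for an arc
`e = (v_p, v_q)` of the graph `G_i`, where `x*` is the all-ones string of length r. -/
def sArc (r i p q : ℕ) : List Bool :=
  binEnc r i ++ List.replicate r true ++ binEnc r i ++ binEnc r p ++ binEnc r i ++
    List.replicate r true ++ binEnc r i ++ binEnc r q ++ binEnc r i ++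
    List.replicate r true ++ binEnc r i

namespace List

variable {β : Type*}

theorem getElem?_eq_of_drop_eq_take {l l' : List β} {d k m : ℕ} (h : l.drop d = l'.take k)
    (hm : m < k) : l[d + m]? = l'[m]? := by
  simpa [getElem?_take, hm] using congrArg (·[m]?) h

variable {L L' : List (List β)} {n : ℕ}

theorem getElem?_flatten_of_forall_length_eq (hL : ∀ l ∈ L, l.length = n) {m : ℕ} (hm : m < n)
    (c : ℕ) : L.flatten[c * n + m]? = L[c]?.bind (·[m]?) := by
  induction L generalizing c with
  | nil => simp
  | cons l L ih =>
    have hl : l.length = n := hL l mem_cons_self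
    cases c with
    | zero => simp [getElem?_append_left (hl ▸ hm)]
    | succ c =>
      rw [flatten_cons, show (c + 1) * n + m = l.length + (c * n + m) by rw [hl]; ring,
        getElem?_append_right (by omega), Nat.add_sub_cancel_left,
        ih fun l' hl' => hL l' (mem_cons_of_mem l hl')]
      simp

theorem drop_mul_flatten_of_forall_length_eq (hL : ∀ l ∈ L, l.length = n) (c : ℕ) :
    L.flatten.drop (c * n) = (L.drop c).flatten := by
  induction L generalizing c with
  | nil => simp
  | cons l L ih =>
    have hl : l.length = n := hL l mem_cons_self
    cases c with
    | zero => simp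
    | succ c =>
      rw [flatten_cons, show (c + 1) * n = l.length + c * n by rw [hl]; ring, ← drop_drop,
        drop_left, ih fun l' hl' => hL l' (mem_cons_of_mem l hl'), drop_succ_cons]

theorem take_mul_flatten_of_forall_length_eq (hL : ∀ l ∈ L, l.length = n) (c : ℕ) :
    L.flatten.take (c * n) = (L.take c).flatten := by
  induction L generalizing c with
  | nil => simp
  | cons l L ih =>
    have hl : l.length = n := hL l mem_cons_self
    cases c with
    | zero => simp
    | succ c =>
      rw [flatten_cons, show (c + 1) * n = l.length + c * n by rw [hl]; ring,
        take_length_add_append, ih fun l' hl' => hL l' (mem_cons_of_mem l hl'), take_succ_cons,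
        flatten_cons]

theorem flatten_inj_of_forall_length_eq (hlen : L.length = L'.length)
    (hL : ∀ l ∈ L, l.length = n) (hL' : ∀ l ∈ L', l.length = n) :
    L.flatten = L'.flatten ↔ L = L' := by
  rw [eq_iff_flatten_eq, and_iff_left
    (by rw [map_congr_left hL, map_congr_left hL', map_const', map_const', hlen])]

end List

theorem ovLen_spec (s t : List α) : s.drop (s.length - ovLen s t) = t.take (ovLen s t) := by
  unfold ovLen
  exact Nat.findGreatest_spec (P := fun k => s.drop (s.length - k) = t.take k) (Nat.zero_le _)
    (by simp)

theorem ovLen_le_of_forall_gt {s t : List α} {n : ℕ}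
    (h : ∀ k, n < k → k ≤ s.length → k ≤ t.length → s.drop (s.length - k) ≠ t.take k) :
    ovLen s t ≤ n := by
  by_contra! hn
  have hle : ovLen s t ≤ min s.length t.length := Nat.findGreatest_le _
  exact h _ hn (hle.trans (min_le_left _ _)) (hle.trans (min_le_right _ _)) (ovLen_spec s t)

theorem ovLen_eq_iff_of_ovLen_le {s t : List α} {n : ℕ} (hle : ovLen s t ≤ n)
    (hs : n ≤ s.length) (ht : n ≤ t.length) :
    ovLen s t = n ↔ s.drop (s.length - n) = t.take n := by
  refine ⟨fun h => h ▸ ovLen_spec s t, fun h => hle.antisymm ?_⟩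
  exact Nat.le_findGreatest (le_min hs ht) h

@[simp]
theorem binEnc_length (r a : ℕ) : (binEnc r a).length = r := by simp [binEnc]

theorem binEnc_getElem? {r m : ℕ} (a : ℕ) (hm : m < r) :
    (binEnc r a)[m]? = some (a.testBit (r - 1 - m)) := by
  simp [binEnc, hm]

theorem binEnc_getElem?_zero {r a : ℕ} (hr : 0 < r) (ha : a < 2 ^ (r - 1)) :
    (binEnc r a)[0]? = some false := by
  rw [binEnc_getElem? a hr, Nat.sub_zero, Nat.testBit_lt_two_pow ha]

theorem binEnc_inj {r a b : ℕ} (ha : a < 2 ^ r) (hb : b < 2 ^ r) :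
    binEnc r a = binEnc r b ↔ a = b := by
  refine ⟨fun h => Nat.eq_of_testBit_eq fun k => ?_, fun h => h ▸ rfl⟩
  by_cases hk : k < r
  · have hbit := congrArg (·[r - 1 - k]?) h
    simpa only [binEnc_getElem? _ (show r - 1 - k < r by omega),
      show r - 1 - (r - 1 - k) = k by omega, Option.some.injEq] using hbit
  · have hrk : 2 ^ r ≤ 2 ^ k := Nat.pow_le_pow_right two_pos (by omega)
    rw [Nat.testBit_lt_two_pow (ha.trans_le hrk), Nat.testBit_lt_two_pow (hb.trans_le hrk)]

def arcBlocks (r i p q : ℕ) : List (List Bool) :=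
  [binEnc r i, replicate r true, binEnc r i, binEnc r p, binEnc r i, replicate r true,
    binEnc r i, binEnc r q, binEnc r i, replicate r true, binEnc r i]

section sArc

variable {r i p q : ℕ}

theorem length_of_mem_arcBlocks : ∀ l ∈ arcBlocks r i p q, l.length = r := by
  simp [arcBlocks]

theorem sArc_eq_flatten_arcBlocks : sArc r i p q = (arcBlocks r i p q).flatten := by
  simp [sArc, arcBlocks]

theorem sArc_length (r i p q : ℕ) : (sArc r i p q).length = 11 * r := by
  simp [sArc]; ring

theorem sArc_getElem?_mul_add {m : ℕ} (hm : m < r) (c : ℕ) :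
    (sArc r i p q)[c * r + m]? = (arcBlocks r i p q)[c]?.bind (·[m]?) := by
  rw [sArc_eq_flatten_arcBlocks, getElem?_flatten_of_forall_length_eq length_of_mem_arcBlocks hm]

theorem sArc_drop_eq_take_iff {i' q' z : ℕ} (hi : i < 2 ^ r) (hq : q < 2 ^ r) (hi' : i' < 2 ^ r)
    (hq' : q' < 2 ^ r) :
    (sArc r i p q).drop (4 * r) = (sArc r i' q' z).take (7 * r) ↔ i = i' ∧ q = q' := by
  rw [sArc_eq_flatten_arcBlocks, sArc_eq_flatten_arcBlocks,
    drop_mul_flatten_of_forall_length_eq length_of_mem_arcBlocks,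
    take_mul_flatten_of_forall_length_eq length_of_mem_arcBlocks,
    flatten_inj_of_forall_length_eq (by simp [arcBlocks])
      (fun l hl => length_of_mem_arcBlocks l (mem_of_mem_drop hl))
      (fun l hl => length_of_mem_arcBlocks l (mem_of_mem_take hl))]
  simp +contextual [arcBlocks, binEnc_inj hi hi', binEnc_inj hq hq']

theorem sArc_drop_ne_take {i' q' z k : ℕ} (hi : i < 2 ^ (r - 1)) (hp : p < 2 ^ (r - 1))
    (hi' : i' < 2 ^ (r - 1)) (hne : sArc r i p q ≠ sArc r i' q' z) (hk : 7 * r < k)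
    (hk' : k ≤ 11 * r) : (sArc r i p q).drop (11 * r - k) ≠ (sArc r i' q' z).take k := by
  intro h
  obtain hlt | rfl := hk'.lt_or_eq
  swap
  · rw [Nat.sub_self, drop_zero, ← sArc_length r i' q' z, take_length] at h
    exact hne h
  have hr : 0 < r := by omega
  set d := 11 * r - k
  have mismatch : ∀ c a c' b, a < r → b < r → c' * r + b < k → d + (c' * r + b) = c * r + a →
      (arcBlocks r i p q)[c]?.bind (·[a]?) ≠ (arcBlocks r i' q' z)[c']?.bind (·[b]?) → False := by
    intro c a c' b ha hb hbk hab hne'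
    have hmatch := getElem?_eq_of_drop_eq_take h hbk
    rw [hab, sArc_getElem?_mul_add ha, sArc_getElem?_mul_add hb] at hmatch
    exact hne' hmatch
  by_cases hd1 : d ≤ r
  · exact mismatch 2 0 1 (r - d) hr (by omega) (by omega) (by omega)
      (by simp [arcBlocks, binEnc_getElem?_zero hr hi, show r - d < r by omega])
  by_cases hd2 : d ≤ 2 * r
  · exact mismatch 3 0 1 (2 * r - d) hr (by omega) (by omega) (by omega)
      (by simp [arcBlocks, binEnc_getElem?_zero hr hp, show 2 * r - d < r by omega])
  by_cases hd3 : d ≤ 3 * r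
  · exact mismatch 4 0 1 (3 * r - d) hr (by omega) (by omega) (by omega)
      (by simp [arcBlocks, binEnc_getElem?_zero hr hi, show 3 * r - d < r by omega])
  · exact mismatch 5 (d - 3 * r) 2 0 (by omega) hr (by omega) (by omega)
      (by simp [arcBlocks, binEnc_getElem?_zero hr hi', show d - 3 * r < r by omega])

end sArc

theorem sArc_overlap_general (r i i' p q q' z : ℕ)
    (hiu : i ≤ 2 ^ (r - 1) - 1)
    (hiu' : i' ≤ 2 ^ (r - 1) - 1)
    (hpu : p ≤ 2 ^ (r - 1) - 1)
    (hqu : q ≤ 2 ^ (r - 1) - 1)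
    (hqu' : q' ≤ 2 ^ (r - 1) - 1)
    (h1 : ¬ sArc r i p q <:+: sArc r i' q' z) :
    ovLen (sArc r i p q) (sArc r i' q' z) ≤ 7 * r ∧
      (ovLen (sArc r i p q) (sArc r i' q' z) = 7 * r ↔ i = i' ∧ q = q') := by
  have hlt : ∀ {a}, a ≤ 2 ^ (r - 1) - 1 → a < 2 ^ (r - 1) := fun _ => by
    have := Nat.two_pow_pos (r - 1); omega
  have hlt' : ∀ {a}, a ≤ 2 ^ (r - 1) - 1 → a < 2 ^ r := fun ha =>
    (hlt ha).trans_le (Nat.pow_le_pow_right two_pos (Nat.sub_le r 1))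
  have hne : sArc r i p q ≠ sArc r i' q' z := fun h => h1 (h ▸ infix_refl _)
  have hle : ovLen (sArc r i p q) (sArc r i' q' z) ≤ 7 * r :=
    ovLen_le_of_forall_gt fun k hk hks _ => by
      rw [sArc_length] at hks ⊢
      exact sArc_drop_ne_take (hlt hiu) (hlt hpu) (hlt hiu') hne hk hks
  refine ⟨hle, ?_⟩
  rw [ovLen_eq_iff_of_ovLen_le hle (by rw [sArc_length]; omega) (by rw [sArc_length]; omega),
    sArc_length, show 11 * r - 7 * r = 4 * r by omega]
  exact sArc_drop_eq_take_iff (hlt' hiu) (hlt' hqu) (hlt' hiu') (hlt' hqu')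

/-- for arcs e = (v_p, v_q) in G_i and e' = (v_{q'}, v_z) in G_{i'},
|overlap(s_e, s_{e'})| ≤ 7r, with equality iff i = i' and q = q'. -/
theorem sArc_overlap (r i i' p q q' z : ℕ) (hr : 2 ≤ r)
    (hi : 1 ≤ i) (hiu : i ≤ 2 ^ (r - 1) - 1)
    (hi' : 1 ≤ i') (hiu' : i' ≤ 2 ^ (r - 1) - 1)
    (hp : 1 ≤ p) (hpu : p ≤ 2 ^ (r - 1) - 1)
    (hq : 1 ≤ q) (hqu : q ≤ 2 ^ (r - 1) - 1)
    (hq' : 1 ≤ q') (hqu' : q' ≤ 2 ^ (r - 1) - 1)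
    (hz : 1 ≤ z) (hzu : z ≤ 2 ^ (r - 1) - 1)
    (h1 : ¬ sArc r i p q <:+: sArc r i' q' z) (h2 : ¬ sArc r i' q' z <:+: sArc r i p q) :
    ovLen (sArc r i p q) (sArc r i' q' z) ≤ 7 * r ∧
      (ovLen (sArc r i p q) (sArc r i' q' z) = 7 * r ↔ i = i' ∧ q = q') :=
  sArc_overlap_general r i i' p q q' z hiu hiu' hpu hqu hqu' h1
end
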